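/- For every n ≥ 1, in the POMDP P_n (defined in the context) with safety objective Safe(L ∖ {Bad}), Player 1 has a pure observation-based strategy that is almost-sure winning from the initial state q_0. Concretely, the strategy which, while the current observation is o_2 and has been observed j times consecutively (1 ≤ j < p*_n), plays some action i ∈ {1,…,n} with j mod p_i ≠ 0, and plays # when j = p*_n, achieves Safe(L ∖ {Bad}) with probability 1 from q_0. -/

import Mathlib

/-!
Under the strategy, the counter `j` of consecutive loop observations always satisfies
`j ≡ k + 1 [MOD p_i]` while the play is in state `q_{k+1}^i`, and `1 ≤ j ≤ p*_n`.
Hence when the play sits at the top `q_{p_i}^i` of loop `i`, `p_i ∣ j`: if `j < p*_n`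
the chosen action `i₀` satisfies `p_{i₀} ∤ j`, so `i₀ ≠ i` and `Bad` is avoided; if
`j = p*_n`, every `p_i` divides `j`, so the play is at the top of its loop and `#`
safely returns to `q_0`. Thus no prefix of positive probability visits `Bad`, and
every finite-horizon safety probability equals `1`.
-/

open scoped ENNReal

/-- A partially-observable Markov decision process (POMDP) with states `L`,
actions `A` and observations `O`: a probabilistic transition function and an
observation function (the observations partition the state space). -/
structure POMDP (L : Type) (A : Type) (O : Type) where
  δ : L → A → PMF L
  obs : L → O

namespace POMDP

variable {L A O : Type}

/-- A (randomized) strategy: given the initial state and the history of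
(action, state) steps played so far, it chooses a distribution on actions. -/
abbrev Strategy (L A : Type) := L → List (A × L) → PMF A

/-- The sequence of states visited along a finite prefix. -/
def statesOf (l : L) (h : List (A × L)) : List L := l :: h.map Prod.snd

/-- Auxiliary probability of a finite prefix, for a strategy `π` given as a
function of the remaining history. -/
noncomputable def prefProbAux (M : POMDP L A O) :
    (List (A × L) → PMF A) → L → List (A × L) → ℝ≥0∞
  | _, _, [] => 1
  | π, l, (a, l') :: h =>
      π [] a * M.δ l a l' * M.prefProbAux (fun h' => π ((a, l') :: h')) l' h

/-- The probability, under strategy `α` from state `l`, that the play starts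
with the finite prefix `h` of (action, state) steps. -/
noncomputable def prefProb (M : POMDP L A O) (α : Strategy L A) (l : L)
    (h : List (A × L)) : ℝ≥0∞ :=
  M.prefProbAux (α l) l h

/-- A prefix is consistent with `α` from `l` if it has positive probability. -/
def Consistent (M : POMDP L A O) (α : Strategy L A) (l : L) (h : List (A × L)) : Prop :=
  0 < M.prefProb α l h

/-- The probability, under strategy `α` from state `l`, that the length-`n`
prefix of the play satisfies the predicate `P`. -/
noncomputable def horizonProb (M : POMDP L A O) [Fintype L] [Fintype A]
    (α : Strategy L A) (l : L) (n : ℕ) (P : List (A × L) → Prop) : ℝ≥0∞ :=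
  ∑ f : Fin n → A × L,
    Set.indicator {g : Fin n → A × L | P (List.ofFn g)}
      (fun g => M.prefProb α l (List.ofFn g)) f

/-- `Pr_l^α(Reach(T))`: probability that the play visits a state of `T`
(as the increasing limit of the finite-horizon reachability probabilities). -/
noncomputable def reachProb (M : POMDP L A O) [Fintype L] [Fintype A]
    (α : Strategy L A) (l : L) (T : Set L) : ℝ≥0∞ :=
  ⨆ n, M.horizonProb α l n (fun h => ∃ s ∈ statesOf l h, s ∈ T)

/-- `Pr_l^α(Safe(T))`: probability that all states of the play lie in `T`
(as the decreasing limit of the finite-horizon safety probabilities). -/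
noncomputable def safeProb (M : POMDP L A O) [Fintype L] [Fintype A]
    (α : Strategy L A) (l : L) (T : Set L) : ℝ≥0∞ :=
  ⨅ n, M.horizonProb α l n (fun h => ∀ s ∈ statesOf l h, s ∈ T)

/-- `Pr_l^α(Until(T₁,T₂))`: probability that the play visits `T₂` at some
position `k` with all positions `≤ k` in `T₁`. -/
noncomputable def untilProb (M : POMDP L A O) [Fintype L] [Fintype A]
    (α : Strategy L A) (l : L) (T₁ T₂ : Set L) : ℝ≥0∞ :=
  ⨆ n, M.horizonProb α l n (fun h => ∃ k, ∃ hk : k < (statesOf l h).length,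
      (statesOf l h).get ⟨k, hk⟩ ∈ T₂ ∧
      ∀ j, ∀ hj : j < (statesOf l h).length, j ≤ k → (statesOf l h).get ⟨j, hj⟩ ∈ T₁)

/-- `Pr_l^α(coBüchi(T))`: probability that from some point on all states of
the play lie in `T`. -/
noncomputable def coBuchiProb (M : POMDP L A O) [Fintype L] [Fintype A]
    (α : Strategy L A) (l : L) (T : Set L) : ℝ≥0∞ :=
  ⨆ k, ⨅ n, M.horizonProb α l n (fun h =>
    ∀ j, ∀ hj : j < (statesOf l h).length, k ≤ j → (statesOf l h).get ⟨j, hj⟩ ∈ T)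

/-- `Pr_l^α(Büchi(T))`: probability that the play visits `T` infinitely often. -/
noncomputable def buchiProb (M : POMDP L A O) [Fintype L] [Fintype A]
    (α : Strategy L A) (l : L) (T : Set L) : ℝ≥0∞ :=
  ⨅ k, ⨆ n, M.horizonProb α l n (fun h =>
    ∃ j, ∃ hj : j < (statesOf l h).length, k ≤ j ∧ (statesOf l h).get ⟨j, hj⟩ ∈ T)

/-- A strategy is observation-based if it plays the same distribution after any
two prefixes with the same sequences of observations and of actions. -/
def ObservationBased (M : POMDP L A O) (α : Strategy L A) : Prop :=
  ∀ l l' (h h' : List (A × L)), M.obs l = M.obs l' →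
    h.map Prod.fst = h'.map Prod.fst →
    h.map (fun p => M.obs p.2) = h'.map (fun p => M.obs p.2) →
    α l h = α l' h'

/-- A strategy is pure if it always plays a Dirac distribution. -/
def PureStrategy (α : Strategy L A) : Prop := ∀ l h, ∃ a, α l h = PMF.pure a

/-- Edge of the underlying graph of the POMDP. -/
def Edge (M : POMDP L A O) (l l' : L) : Prop := ∃ a, 0 < M.δ l a l'

/-- Reachability in the underlying graph of the POMDP. -/
def ReachableFrom (M : POMDP L A O) (l l' : L) : Prop :=
  Relation.ReflTransGen M.Edge l l'

/-- The memory state reached by a memory-update function `u` (together with the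
current state) after running through a prefix. -/
def memRun (M : POMDP L A O) {Mem : Type} (u : Mem → O → A → Mem) :
    Mem → L → List (A × L) → Mem × L
  | m, l, [] => (m, l)
  | m, l, (a, l') :: h => M.memRun u (u m (M.obs l) a) l' h

/-- The (observation-based) strategy induced by a finite-memory machine given by
memory-update function `u`, next-action function `next` and initial memory `m0`. -/
def fmStrategy (M : POMDP L A O) {Mem : Type} (u : Mem → O → A → Mem)
    (next : Mem → O → PMF A) (m0 : Mem) : Strategy L A :=
  fun l h =>
    let p := M.memRun u m0 l h
    next p.1 (M.obs p.2)

/-- The distribution choosing `x` and `y` with probability 1/2 each. -/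
noncomputable def half (x y : L) : PMF L :=
  (PMF.uniformOfFintype Bool).map (fun b => if b then x else y)

end POMDP

/-- The state space of the POMDP `P_n`: for each `1 ≤ i ≤ n` a loop of `p_i`
states `q_1^i, …, q_{p_i}^i` where `p_i` is the `i`-th prime number (encoded as
`Sum.inl ⟨i, j⟩` with `j : Fin p_i` standing for `q_{j+1}^i`), together with the
initial state `q_0 = Sum.inr 0` and the absorbing state `Bad = Sum.inr 1`. -/
abbrev PnState (n : ℕ) : Type :=
  (Σ i : Fin n, Fin (Nat.nth Nat.Prime i.val)) ⊕ Fin 2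

/-- The actions of `P_n`: `some i` is the action `i+1 ∈ Σ_n = {1,…,n}` and
`none` is the action `#`. -/
abbrev PnAction (n : ℕ) : Type := Option (Fin n)

/-- `p*_n = p_1 ⋯ p_n`, the product of the first `n` primes. -/
noncomputable def pstar (n : ℕ) : ℕ := ∏ i : Fin n, Nat.nth Nat.Prime i.val

/-- The POMDP `P_n`. From `q_0`, every action in `Σ_n` goes to `q_1^i` with
probability `1/n` for each `i`, and `#` goes to `Bad`. From `q_j^i` with
`j < p_i`, every action in `Σ_n` goes to `q_{j+1}^i` and to `q_0` with
probability `1/2` each, and `#` goes to `Bad`. From `q_{p_i}^i`, every action in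
`Σ_n ∖ {i}` goes to `q_1^i` and to `q_0` with probability `1/2` each, the action
`i` goes to `Bad`, and `#` goes to `q_0`. `Bad` is absorbing. Observations:
`o_1 = {q_0}` (observation `0`), `o_2` = the loop states (observation `1`), and
`{Bad}` (observation `2`). -/
noncomputable def PnM (n : ℕ) [NeZero n] : POMDP (PnState n) (PnAction n) (Fin 3) where
  δ := fun s act =>
    match s with
    | Sum.inr k =>
        if k = 0 then
          match act with
          | some _ => (PMF.uniformOfFintype (Fin n)).map
              (fun i => Sum.inl ⟨i, ⟨0, (Nat.prime_nth_prime i.val).pos⟩⟩)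
          | none => PMF.pure (Sum.inr 1)
        else PMF.pure (Sum.inr 1)
    | Sum.inl ⟨i, j⟩ =>
        if hlt : j.val + 1 < Nat.nth Nat.Prime i.val then
          match act with
          | some _ => POMDP.half (Sum.inl ⟨i, ⟨j.val + 1, hlt⟩⟩) (Sum.inr 0)
          | none => PMF.pure (Sum.inr 1)
        else
          match act with
          | some k =>
              if k = i then PMF.pure (Sum.inr 1)
              else POMDP.half (Sum.inl ⟨i, ⟨0, (Nat.prime_nth_prime i.val).pos⟩⟩)
                     (Sum.inr 0)
          | none => PMF.pure (Sum.inr 0)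
  obs := fun s =>
    match s with
    | Sum.inr k => if k = 0 then 0 else 2
    | Sum.inl _ => 1

/-- The number `j` of consecutive loop states (observation `o_2`) observed at
the end of the current prefix of states. -/
def trailingLoops {n : ℕ} (st : List (PnState n)) : ℕ :=
  (st.reverse.takeWhile Sum.isLeft).length

/-- The concrete strategy of Statement 13: while the current observation is
`o_2` and has been observed `j` times consecutively with `1 ≤ j < p*_n`, play
some action `i ∈ {1,…,n}` with `j mod p_i ≠ 0` (i.e. `¬ p_i ∣ j`); play `#`
when `j = p*_n` (at `q_0`, i.e. `j = 0`, play an arbitrary action of `Σ_n`). -/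
noncomputable def pnStrategy (n : ℕ) [NeZero n] :
    POMDP.Strategy (PnState n) (PnAction n) :=
  fun l h =>
    let j := trailingLoops (POMDP.statesOf l h)
    if j = 0 then PMF.pure (some 0)
    else if hj : j < pstar n ∧ ∃ i : Fin n, ¬ Nat.nth Nat.Prime i.val ∣ j then
      PMF.pure (some hj.2.choose)
    else PMF.pure none

theorem PMF.sum_coe {α : Type*} [Fintype α] (p : PMF α) : ∑ a, p a = 1 := by
  simpa [tsum_fintype] using p.tsum_coe

theorem Fintype.sum_list_ofFn_succ {X M : Type*} [Fintype X] [AddCommMonoid M] (m : ℕ)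
    (g : List X → M) :
    ∑ f : Fin (m + 1) → X, g (List.ofFn f) = ∑ x, ∑ f : Fin m → X, g (x :: List.ofFn f) := by
  rw [← (Fin.consEquiv fun _ => X).sum_comp, Fintype.sum_prod_type]
  simp [Fin.consEquiv, List.ofFn_succ]

namespace POMDP

variable {L A O : Type}

def lastState : L → List (A × L) → L
  | l, [] => l
  | _, (_, l') :: h => lastState l' h

theorem lastState_snoc (l : L) (h : List (A × L)) (a : A) (l' : L) :
    lastState l (h ++ [(a, l')]) = l' := by
  induction h generalizing l with
  | nil => rfl
  | cons p t ih => exact ih p.2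

theorem half_apply_ne_zero {x y s : L} (h : half x y s ≠ 0) : s = x ∨ s = y := by
  rw [← PMF.mem_support_iff] at h
  simpa [half, eq_comm, or_comm] using h

theorem statesOf_snoc (l : L) (h : List (A × L)) (a : A) (l' : L) :
    statesOf l (h ++ [(a, l')]) = statesOf l h ++ [l'] := by
  simp [statesOf]

theorem prefProbAux_snoc (M : POMDP L A O) (π : List (A × L) → PMF A) (l : L)
    (h : List (A × L)) (a : A) (l' : L) :
    M.prefProbAux π l (h ++ [(a, l')]) =
      M.prefProbAux π l h * π h a * M.δ (lastState l h) a l' := by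
  induction h generalizing π l with
  | nil => simp [prefProbAux, lastState]
  | cons p t ih =>
    simp only [List.cons_append, prefProbAux, lastState, ih]
    ring

theorem prefProb_snoc (M : POMDP L A O) (α : Strategy L A) (l : L)
    (h : List (A × L)) (a : A) (l' : L) :
    M.prefProb α l (h ++ [(a, l')]) =
      M.prefProb α l h * α l h a * M.δ (lastState l h) a l' :=
  M.prefProbAux_snoc (α l) l h a l'

variable [Fintype L] [Fintype A]

theorem sum_prefProbAux (M : POMDP L A O) (m : ℕ) (π : List (A × L) → PMF A) (l : L) :
    ∑ f : Fin m → A × L, M.prefProbAux π l (List.ofFn f) = 1 := by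
  induction m generalizing π l with
  | zero => simp [prefProbAux]
  | succ m ih =>
    simp only [Fintype.sum_list_ofFn_succ, prefProbAux, ← Finset.mul_sum, ih, mul_one,
      Fintype.sum_prod_type, (M.δ l _).sum_coe, (π []).sum_coe]

theorem horizonProb_eq_one (M : POMDP L A O) (α : Strategy L A) (l : L) (m : ℕ)
    (P : List (A × L) → Prop)
    (hP : ∀ f : Fin m → A × L, M.prefProb α l (List.ofFn f) ≠ 0 → P (List.ofFn f)) :
    M.horizonProb α l m P = 1 := by
  rw [horizonProb, ← M.sum_prefProbAux m (α l) l]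
  refine Finset.sum_congr rfl fun f _ => ?_
  by_cases hf : M.prefProb α l (List.ofFn f) = 0
  · simp [hf, show M.prefProbAux (α l) l (List.ofFn f) = 0 from hf]
  · exact Set.indicator_of_mem (hP f hf) _

theorem safeProb_eq_one_of_invariant (M : POMDP L A O) (α : Strategy L A) (l : L) (T : Set L)
    (I : List (A × L) → Prop) (h_nil : I [])
    (h_step : ∀ h a l', I h → α l h a ≠ 0 → M.δ (lastState l h) a l' ≠ 0 → I (h ++ [(a, l')]))
    (h_safe : ∀ h, I h → lastState l h ∈ T) :
    M.safeProb α l T = 1 := by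
  have key : ∀ h, M.prefProb α l h ≠ 0 → I h ∧ ∀ s ∈ statesOf l h, s ∈ T := by
    intro h
    induction h using List.reverseRecOn with
    | nil => exact fun _ => ⟨h_nil, by simpa [statesOf, lastState] using h_safe [] h_nil⟩
    | append_singleton h p ih =>
      obtain ⟨a, l'⟩ := p
      intro hpos
      rw [prefProb_snoc, mul_ne_zero_iff, mul_ne_zero_iff] at hpos
      obtain ⟨⟨hh, ha⟩, hδ⟩ := hpos
      obtain ⟨hI, hT⟩ := ih hh
      have hI' := h_step h a l' hI ha hδ
      refine ⟨hI', ?_⟩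
      have hlast := h_safe _ hI'
      rw [lastState_snoc] at hlast
      simpa [statesOf_snoc, or_imp, forall_and, hlast] using hT
  simp only [safeProb]
  rw [← iInf_const (ι := ℕ) (a := (1 : ℝ≥0∞))]
  exact iInf_congr fun m => M.horizonProb_eq_one α l m _ fun f hf => (key _ hf).2

end POMDP

section Pn

variable {n : ℕ}

theorem pstar_pos (n : ℕ) : 0 < pstar n :=
  Finset.prod_pos fun i _ => (Nat.prime_nth_prime i.val).pos

theorem nth_prime_dvd_pstar (i : Fin n) : Nat.nth Nat.Prime i.val ∣ pstar n :=
  Finset.dvd_prod_of_mem _ (Finset.mem_univ i)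

theorem pstar_dvd_of_forall_dvd {j : ℕ} (h : ∀ i : Fin n, Nat.nth Nat.Prime i.val ∣ j) :
    pstar n ∣ j := by
  refine Fintype.prod_dvd_of_isRelPrime (fun i k hik => ?_) h
  refine Nat.coprime_iff_isRelPrime.mp <|
    (Nat.coprime_primes (Nat.prime_nth_prime _) (Nat.prime_nth_prime _)).mpr fun heq => hik ?_
  exact Fin.val_injective (Nat.nth_injective Nat.infinite_setOfPred_prime heq)

theorem exists_not_nth_prime_dvd {j : ℕ} (h0 : j ≠ 0) (hlt : j < pstar n) :
    ∃ i : Fin n, ¬ Nat.nth Nat.Prime i.val ∣ j := by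
  by_contra! h
  exact (Nat.le_of_dvd (Nat.pos_of_ne_zero h0) (pstar_dvd_of_forall_dvd h)).not_gt hlt

theorem Nat.dvd_iff_eq_of_modEq_succ {p k j : ℕ} (hk : k < p) (h : j ≡ k + 1 [MOD p]) :
    p ∣ j ↔ k + 1 = p := by
  rw [h.dvd_iff dvd_rfl]
  exact ⟨fun hd => le_antisymm hk (Nat.le_of_dvd k.succ_pos hd), fun he => he ▸ dvd_rfl⟩

theorem trailingLoops_snoc (st : List (PnState n)) (s : PnState n) :
    trailingLoops (st ++ [s]) = if s.isLeft then trailingLoops st + 1 else 0 := by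
  cases hs : s.isLeft <;> simp [trailingLoops, hs]

noncomputable def pnAction (n : ℕ) [NeZero n] (j : ℕ) : PnAction n :=
  if j = 0 then some 0
  else if hj : j < pstar n ∧ ∃ i : Fin n, ¬ Nat.nth Nat.Prime i.val ∣ j then
    some hj.2.choose
  else none

variable [NeZero n]

theorem pnStrategy_eq_pure (l : PnState n) (h : List (PnAction n × PnState n)) :
    pnStrategy n l h = PMF.pure (pnAction n (trailingLoops (POMDP.statesOf l h))) := by
  simp only [pnStrategy, pnAction]
  split_ifs <;> rfl

theorem pnAction_zero : pnAction n 0 = some 0 := if_pos rfl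

theorem exists_pnAction_eq_not_dvd {j : ℕ} (h0 : j ≠ 0) (hlt : j < pstar n) :
    ∃ i : Fin n, pnAction n j = some i ∧ ¬ Nat.nth Nat.Prime i.val ∣ j := by
  have hj : j < pstar n ∧ ∃ i : Fin n, ¬ Nat.nth Nat.Prime i.val ∣ j :=
    ⟨hlt, exists_not_nth_prime_dvd h0 hlt⟩
  exact ⟨hj.2.choose, by rw [pnAction, if_neg h0, dif_pos hj], hj.2.choose_spec⟩

theorem pnAction_pstar : pnAction n (pstar n) = none := by
  rw [pnAction, if_neg (pstar_pos n).ne', dif_neg fun hj => lt_irrefl _ hj.1]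

theorem trailingLoops_eq_of_map_obs_eq {st st' : List (PnState n)}
    (h : st.map (PnM n).obs = st'.map (PnM n).obs) : trailingLoops st = trailingLoops st' := by
  have hleft : (Sum.isLeft : PnState n → Bool) = (fun o => o == 1) ∘ (PnM n).obs := by
    funext s
    rcases s with _ | k
    · rfl
    · fin_cases k <;> rfl
  simp only [trailingLoops, hleft, ← List.length_map (f := (PnM n).obs), ← List.takeWhile_map,
    List.map_reverse, h]

theorem pnStrategy_observationBased : (PnM n).ObservationBased (pnStrategy n) := by
  intro l l' h h' hl _ hobs
  rw [pnStrategy_eq_pure, pnStrategy_eq_pure,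
    trailingLoops_eq_of_map_obs_eq (st' := POMDP.statesOf l' h')]
  simpa [POMDP.statesOf, hl, Function.comp_def] using hobs

theorem PnM_delta_home_support {σ : Fin n} {s : PnState n}
    (h : (PnM n).δ (Sum.inr 0) (some σ) s ≠ 0) :
    ∃ i : Fin n, s = Sum.inl ⟨i, ⟨0, (Nat.prime_nth_prime i.val).pos⟩⟩ := by
  rw [← PMF.mem_support_iff] at h
  simpa [PnM, eq_comm] using h

theorem PnM_delta_loop_succ {i : Fin n} {k : Fin (Nat.nth Nat.Prime i.val)}
    (hk : k.val + 1 < Nat.nth Nat.Prime i.val) (σ : Fin n) :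
    (PnM n).δ (Sum.inl ⟨i, k⟩) (some σ) =
      POMDP.half (Sum.inl ⟨i, ⟨k.val + 1, hk⟩⟩) (Sum.inr 0) := by
  simp [PnM, hk]

theorem PnM_delta_loop_top {i : Fin n} {k : Fin (Nat.nth Nat.Prime i.val)}
    (hk : ¬ k.val + 1 < Nat.nth Nat.Prime i.val) {σ : Fin n} (hσ : σ ≠ i) :
    (PnM n).δ (Sum.inl ⟨i, k⟩) (some σ) =
      POMDP.half (Sum.inl ⟨i, ⟨0, (Nat.prime_nth_prime i.val).pos⟩⟩) (Sum.inr 0) := by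
  simp [PnM, hk, hσ]

theorem PnM_delta_loop_top_none {i : Fin n} {k : Fin (Nat.nth Nat.Prime i.val)}
    (hk : ¬ k.val + 1 < Nat.nth Nat.Prime i.val) :
    (PnM n).δ (Sum.inl ⟨i, k⟩) none = PMF.pure (Sum.inr 0) := by
  simp [PnM, hk]

end Pn

section PnInvariant

variable {n : ℕ}

def PnCounterInv : PnState n → ℕ → Prop
  | Sum.inl ⟨i, k⟩, j => 0 < j ∧ j ≤ pstar n ∧ j ≡ k.val + 1 [MOD Nat.nth Nat.Prime i.val]
  | Sum.inr k, j => k = 0 ∧ j = 0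

theorem pnCounterInv_home : PnCounterInv (Sum.inr 0 : PnState n) 0 := ⟨rfl, rfl⟩

theorem PnCounterInv.ne_bad {s : PnState n} {j : ℕ} (h : PnCounterInv s j) : s ≠ Sum.inr 1 := by
  rintro rfl
  exact absurd h.1 (by decide)

variable [NeZero n]

theorem pnCounterInv_step_loop {i : Fin n} {k : Fin (Nat.nth Nat.Prime i.val)} {s : PnState n}
    {j : ℕ} (hinv : PnCounterInv (Sum.inl ⟨i, k⟩) j)
    (hδ : (PnM n).δ (Sum.inl ⟨i, k⟩) (pnAction n j) s ≠ 0) :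
    PnCounterInv s (if s.isLeft then j + 1 else 0) := by
  obtain ⟨hpos, hle, hmod⟩ := hinv
  have htop := Nat.dvd_iff_eq_of_modEq_succ k.isLt hmod
  rcases hle.lt_or_eq with hlt | rfl
  · obtain ⟨σ, hσ, hndvd⟩ := exists_pnAction_eq_not_dvd hpos.ne' hlt
    rw [hσ] at hδ
    by_cases hk : k.val + 1 < Nat.nth Nat.Prime i.val
    · rw [PnM_delta_loop_succ hk] at hδ
      rcases POMDP.half_apply_ne_zero hδ with rfl | rfl
      · exact ⟨j.succ_pos, hlt, hmod.add_right 1⟩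
      · exact pnCounterInv_home
    · have hdvd : Nat.nth Nat.Prime i.val ∣ j := htop.mpr (by omega)
      rw [PnM_delta_loop_top hk fun h => hndvd (by rwa [h])] at hδ
      rcases POMDP.half_apply_ne_zero hδ with rfl | rfl
      · exact ⟨j.succ_pos, hlt, (Nat.modEq_zero_iff_dvd.mpr hdvd).add_right 1⟩
      · exact pnCounterInv_home
  · have hk : ¬ k.val + 1 < Nat.nth Nat.Prime i.val := (htop.mp (nth_prime_dvd_pstar i)).not_lt
    rw [pnAction_pstar, PnM_delta_loop_top_none hk, ← PMF.mem_support_iff,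
      PMF.mem_support_pure_iff] at hδ
    subst hδ
    exact pnCounterInv_home

theorem pnCounterInv_step {s s' : PnState n} {j : ℕ} (hinv : PnCounterInv s j)
    (hδ : (PnM n).δ s (pnAction n j) s' ≠ 0) :
    PnCounterInv s' (if s'.isLeft then j + 1 else 0) := by
  rcases s with ⟨i, k⟩ | k
  · exact pnCounterInv_step_loop hinv hδ
  · obtain ⟨rfl, rfl⟩ := hinv
    rw [pnAction_zero] at hδ
    obtain ⟨i, rfl⟩ := PnM_delta_home_support hδ
    exact ⟨Nat.one_pos, pstar_pos n, rfl⟩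

end PnInvariant

/-- For every `n ≥ 1`, in the POMDP `P_n` with the safety
objective `Safe(L ∖ {Bad})`, the concrete strategy `pnStrategy n` is a pure
observation-based strategy that is almost-sure winning from `q_0`. -/
theorem pn_strategy_almost_sure_safe (n : ℕ) [NeZero n] :
    POMDP.PureStrategy (pnStrategy n) ∧
    (PnM n).ObservationBased (pnStrategy n) ∧
    (PnM n).safeProb (pnStrategy n) (Sum.inr 0) {(Sum.inr 1 : PnState n)}ᶜ = 1 := by
  refine ⟨fun l h => ⟨_, pnStrategy_eq_pure l h⟩, pnStrategy_observationBased, ?_⟩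
  refine (PnM n).safeProb_eq_one_of_invariant _ _ _ (fun h => PnCounterInv
      (POMDP.lastState (Sum.inr 0) h) (trailingLoops (POMDP.statesOf (Sum.inr 0) h)))
    pnCounterInv_home (fun h a s hinv ha hδ => ?_) fun h hinv => hinv.ne_bad
  rw [pnStrategy_eq_pure, ← PMF.mem_support_iff, PMF.mem_support_pure_iff] at ha
  subst ha
  simpa only [POMDP.lastState_snoc, POMDP.statesOf_snoc, trailingLoops_snoc] using
    pnCounterInv_step hinv hδ
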